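/- arXiv:2412.07120 — 5 statements merged into one kernel-verified Lean document; each statement's English description precedes it below -/
import Mathlib

section
/- Let K ⊆ ℝ^d be a nonempty closed convex set, ℓ^(1),…,ℓ^(T) ∈ ℝ^d loss vectors, m^(1),…,m^(T+1) ∈ ℝ^d prediction vectors, and for each t = 1,…,T+1 let ψ^(t) : ℝ^d → ℝ be convex and differentiable, and let x^(t) be a minimizer over K of x ↦ ⟨x, m^(t) + Σ_{s=1}^{t−1} ℓ^(s)⟩ + ψ^(t)(x). Then for every x* ∈ K: Σ_{t=1}^T ⟨x^(t) − x*, ℓ^(t)⟩ ≤ ψ^(T+1)(x*) − ψ^(1)(x^(1)) + Σ_{t=1}^T ( ψ^(t)(x^(t+1)) − ψ^(t+1)(x^(t+1)) ) + Σ_{t=1}^T ( ⟨x^(t) − x^(t+1), ℓ^(t) − m^(t)⟩ − D_{ψ^(t)}(x^(t+1), x^(t)) ) + ⟨x* − x^(T+1), m^(T+1)⟩. -/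
open Finset

noncomputable section

/-- The `(d-1)`-dimensional probability simplex in `ℝ^d`. -/
def simplex (d : ℕ) : Set (Fin d → ℝ) :=
  {x | (∀ k, 0 ≤ x k) ∧ ∑ k, x k = 1}

/-- Standard inner product on `ℝ^d`. -/
def inp {d : ℕ} (u v : Fin d → ℝ) : ℝ := ∑ k, u k * v k

/-- `ℓ¹` norm. -/
def l1 {d : ℕ} (v : Fin d → ℝ) : ℝ := ∑ k, |v k|

/-- `ℓ∞` norm. -/
def linf {d : ℕ} (v : Fin d → ℝ) : ℝ := ⨆ k, |v k|

/-- Matrix-vector product `A y`. -/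
def mvec {d e : ℕ} (A : Fin d → Fin e → ℝ) (v : Fin e → ℝ) : Fin d → ℝ :=
  fun i => ∑ j, A i j * v j

/-- Transposed matrix-vector product `Aᵀ x`. -/
def tvec {d e : ℕ} (A : Fin d → Fin e → ℝ) (v : Fin d → ℝ) : Fin e → ℝ :=
  fun j => ∑ i, A i j * v i

/-- Row-stochastic matrices. -/
def rowStoch {m : ℕ} (M : Fin m → Fin m → ℝ) : Prop :=
  ∀ a, M a ∈ simplex m

/-- Shannon entropy. -/
def shannonH {d : ℕ} (x : Fin d → ℝ) : ℝ := ∑ k, x k * Real.log (1 / x k)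

/-- Log-barrier regularizer. -/
def logBarrier {d : ℕ} (x : Fin d → ℝ) : ℝ := -∑ k, Real.log (x k)

/-- Local norm `‖h‖_{x,φ}` induced by the Hessian of the log-barrier at `x`. -/
def locNorm {d : ℕ} (x h : Fin d → ℝ) : ℝ := Real.sqrt (∑ k, (h k) ^ 2 / (x k) ^ 2)

/-- Dual local norm `‖h‖_{*,x,φ}` for the log-barrier at `x`. -/
def dualLocNorm {d : ℕ} (x h : Fin d → ℝ) : ℝ := Real.sqrt (∑ k, (x k) ^ 2 * (h k) ^ 2)

/-- `log₊ z = max (log z) 4`. -/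
def logp (z : ℕ) : ℝ := max (Real.log z) 4

/-!
First-order optimality of `x^(t)` for the `t`-th OFTRL objective, tested at the next iterate
`x^(t+1)`, bounds `D_{ψ^(t)}(x^(t+1), x^(t))` by the increase of that objective from `x^(t)` to
`x^(t+1)`. Adding the loss `ℓ^(t)` turns each such bound into one step of a telescoping sum of the
plain FTRL objectives `⟨x^(t), Σ_{s<t} ℓ^(s)⟩ + ψ^(t)(x^(t))`, whose last term is compared with
`x*` by optimality of `x^(T+1)`.
-/

section FirstOrderOptimality

variable {E : Type*} [NormedAddCommGroup E] [NormedSpace ℝ E]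

def bregman (ψ : E → ℝ) (x y : E) : ℝ :=
  ψ x - ψ y - fderiv ℝ ψ y (x - y)

theorem IsMinOn.fderiv_sub_nonneg {K : Set E} {f : E → ℝ} {x y : E} (hmin : IsMinOn f K x)
    (hK : Convex ℝ K) (hf : DifferentiableAt ℝ f x) (hx : x ∈ K) (hy : y ∈ K) :
    0 ≤ fderiv ℝ f x (y - x) :=
  hmin.localize.hasFDerivWithinAt_nonneg hf.hasFDerivAt.hasFDerivWithinAt
    (sub_mem_posTangentConeAt_of_segment_subset (hK.segment_subset hx hy))

theorem bregman_le_of_isMinOn {K : Set E} (hK : Convex ℝ K) (φ : E →L[ℝ] ℝ) {ψ : E → ℝ}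
    {x y : E} (hψ : DifferentiableAt ℝ ψ x) (hmin : IsMinOn (fun z ↦ φ z + ψ z) K x)
    (hx : x ∈ K) (hy : y ∈ K) :
    bregman ψ y x ≤ φ (y - x) + ψ y - ψ x := by
  have hderiv : HasFDerivAt (fun z ↦ φ z + ψ z) (φ + fderiv ℝ ψ x) x :=
    φ.hasFDerivAt.add hψ.hasFDerivAt
  have hopt := hmin.fderiv_sub_nonneg hK hderiv.differentiableAt hx hy
  rw [hderiv.fderiv] at hopt
  simp only [add_apply] at hopt
  unfold bregman
  linarith

end FirstOrderOptimality

section OFTRL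

variable {ι : Type*} [Fintype ι]

def dotProductCLM (g : ι → ℝ) : (ι → ℝ) →L[ℝ] ℝ :=
  LinearMap.toContinuousLinearMap ((dotProductBilin ℝ ℝ).flip g)

theorem sum_Icc_one_sub {M : Type*} [AddCommGroup M] (T : ℕ) (f : ℕ → M) :
    ∑ t ∈ Icc 1 T, (f (t + 1) - f t) = f (T + 1) - f 1 := by
  rcases T.eq_zero_or_pos with rfl | hT
  · simp
  · exact sum_Icc_sub hT f

/-- `D t` stands for `D_{ψ^(t)}(x^(t+1), x^(t))`. -/
theorem oftrl_regret_le (T : ℕ) (ℓ m x : ℕ → ι → ℝ) (ψ : ℕ → (ι → ℝ) → ℝ) (D : ℕ → ℝ)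
    (xs : ι → ℝ)
    (hstep : ∀ t ∈ Icc 1 T,
      D t ≤ (x (t + 1) - x t) ⬝ᵥ (m t + ∑ s ∈ Icc 1 (t - 1), ℓ s) + ψ t (x (t + 1)) - ψ t (x t))
    (hlast : x (T + 1) ⬝ᵥ (m (T + 1) + ∑ s ∈ Icc 1 T, ℓ s) + ψ (T + 1) (x (T + 1))
      ≤ xs ⬝ᵥ (m (T + 1) + ∑ s ∈ Icc 1 T, ℓ s) + ψ (T + 1) xs) :
    ∑ t ∈ Icc 1 T, (x t - xs) ⬝ᵥ ℓ t
      ≤ ψ (T + 1) xs - ψ 1 (x 1)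
        + ∑ t ∈ Icc 1 T, (ψ t (x (t + 1)) - ψ (t + 1) (x (t + 1)))
        + ∑ t ∈ Icc 1 T, ((x t - x (t + 1)) ⬝ᵥ (ℓ t - m t) - D t)
        + (xs - x (T + 1)) ⬝ᵥ m (T + 1) := by
  obtain ⟨Φ, hΦ⟩ : ∃ Φ : ℕ → ℝ, ∀ t, Φ t = x t ⬝ᵥ ∑ s ∈ Icc 1 (t - 1), ℓ s + ψ t (x t) :=
    ⟨_, fun _ ↦ rfl⟩
  have hΦstep : ∀ t ∈ Icc 1 T,
      x t ⬝ᵥ ℓ t - (Φ (t + 1) - Φ t)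
        ≤ ψ t (x (t + 1)) - ψ (t + 1) (x (t + 1)) + ((x t - x (t + 1)) ⬝ᵥ (ℓ t - m t) - D t) := by
    intro t ht
    obtain ⟨k, rfl⟩ := Nat.exists_eq_add_one.mpr (mem_Icc.mp ht).1
    have := hstep (k + 1) ht
    simp only [hΦ, Nat.add_sub_cancel, sum_Icc_succ_top (Nat.le_add_left 1 k), dotProduct_add,
      sub_dotProduct, dotProduct_sub] at this ⊢
    linarith
  have hsum := sum_le_sum hΦstep
  rw [sum_sub_distrib, sum_Icc_one_sub, sum_add_distrib, hΦ, hΦ] at hsum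
  simp only [Nat.add_sub_cancel, Nat.sub_self, Icc_eq_empty_of_lt zero_lt_one, sum_empty,
    dotProduct_zero, zero_add] at hsum
  simp only [dotProduct_add] at hlast
  simp only [sub_dotProduct, sum_sub_distrib, ← dotProduct_sum] at hsum ⊢
  linarith

end OFTRL

theorem oftrl_general_bound_general
    (d T : ℕ) (K : Set (Fin d → ℝ))
    (hKconv : Convex ℝ K)
    (ℓ mp : ℕ → Fin d → ℝ)
    (ψ : ℕ → (Fin d → ℝ) → ℝ)
    (hψdiff : ∀ t ∈ Finset.Icc 1 (T + 1), Differentiable ℝ (ψ t))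
    (x : ℕ → Fin d → ℝ)
    (hx : ∀ t ∈ Finset.Icc 1 (T + 1), x t ∈ K ∧
      ∀ z ∈ K,
        inp (x t) (mp t + ∑ s ∈ Finset.Icc 1 (t - 1), ℓ s) + ψ t (x t)
          ≤ inp z (mp t + ∑ s ∈ Finset.Icc 1 (t - 1), ℓ s) + ψ t z) :
    ∀ xs ∈ K,
      ∑ t ∈ Finset.Icc 1 T, inp (x t - xs) (ℓ t)
        ≤ ψ (T + 1) xs - ψ 1 (x 1)
          + (∑ t ∈ Finset.Icc 1 T, (ψ t (x (t + 1)) - ψ (t + 1) (x (t + 1))))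
          + (∑ t ∈ Finset.Icc 1 T,
              (inp (x t - x (t + 1)) (ℓ t - mp t)
                - (ψ t (x (t + 1)) - ψ t (x t)
                    - fderiv ℝ (ψ t) (x t) (x (t + 1) - x t))))
          + inp (xs - x (T + 1)) (mp (T + 1)) := by
  intro xs hxs
  have hstep : ∀ t ∈ Icc 1 T, bregman (ψ t) (x (t + 1)) (x t)
      ≤ (x (t + 1) - x t) ⬝ᵥ (mp t + ∑ s ∈ Icc 1 (t - 1), ℓ s) + ψ t (x (t + 1)) - ψ t (x t) := by
    intro t ht
    have ht' : t ∈ Icc 1 (T + 1) := Icc_subset_Icc_right T.le_succ ht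
    have hnext : t + 1 ∈ Icc 1 (T + 1) := by simp only [mem_Icc] at ht ⊢; omega
    obtain ⟨hxK, hxmin⟩ := hx t ht'
    exact bregman_le_of_isMinOn hKconv (dotProductCLM _) (hψdiff t ht' _)
      (isMinOn_iff.mpr hxmin) hxK (hx (t + 1) hnext).1
  have hlast := (hx (T + 1) (by simp)).2 xs hxs
  rw [Nat.add_sub_cancel] at hlast
  exact oftrl_regret_le T ℓ mp x ψ (fun t ↦ bregman (ψ t) (x (t + 1)) (x t)) xs hstep hlast

/-- general regret bound for optimistic FTRL (Lemma `oftrl_bound`).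
The Bregman divergence `D_{ψ^(t)}(x^(t+1), x^(t))` is written out using `fderiv`. -/
theorem oftrl_general_bound
    (d T : ℕ) (K : Set (Fin d → ℝ))
    (hKne : K.Nonempty) (hKcl : IsClosed K) (hKconv : Convex ℝ K)
    (ℓ mp : ℕ → Fin d → ℝ)
    (ψ : ℕ → (Fin d → ℝ) → ℝ)
    (hψconv : ∀ t ∈ Finset.Icc 1 (T + 1), ConvexOn ℝ Set.univ (ψ t))
    (hψdiff : ∀ t ∈ Finset.Icc 1 (T + 1), Differentiable ℝ (ψ t))
    (x : ℕ → Fin d → ℝ)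
    (hx : ∀ t ∈ Finset.Icc 1 (T + 1), x t ∈ K ∧
      ∀ z ∈ K,
        inp (x t) (mp t + ∑ s ∈ Finset.Icc 1 (t - 1), ℓ s) + ψ t (x t)
          ≤ inp z (mp t + ∑ s ∈ Finset.Icc 1 (t - 1), ℓ s) + ψ t z) :
    ∀ xs ∈ K,
      ∑ t ∈ Finset.Icc 1 T, inp (x t - xs) (ℓ t)
        ≤ ψ (T + 1) xs - ψ 1 (x 1)
          + (∑ t ∈ Finset.Icc 1 T, (ψ t (x (t + 1)) - ψ (t + 1) (x (t + 1))))
          + (∑ t ∈ Finset.Icc 1 T,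
              (inp (x t - x (t + 1)) (ℓ t - mp t)
                - (ψ t (x (t + 1)) - ψ t (x t)
                    - fderiv ℝ (ψ t) (x t) (x (t + 1) - x t))))
          + inp (xs - x (T + 1)) (mp (T + 1)) :=
  oftrl_general_bound_general d T K hKconv ℓ mp ψ hψdiff x hx
end
end

section
/- Let d ≥ 2, let η^(1) ≥ η^(2) ≥ ⋯ ≥ η^(T+1) > 0 be a nonincreasing sequence, let ℓ^(1),…,ℓ^(T), m^(1),…,m^(T+1) ∈ ℝ^d, and for each t = 1,…,T+1 let x^(t) be a minimizer over Δ_d of x ↦ ⟨x, m^(t) + Σ_{s=1}^{t−1} ℓ^(s)⟩ − H(x)/η^(t), where H(x) = Σ_k x(k) log(1/x(k)) is the Shannon entropy. Then for every x* ∈ Δ_d: Σ_{t=1}^T ⟨x^(t) − x*, ℓ^(t)⟩ ≤ (log d)/η^(T+1) + Σ_{t=1}^T η^(t) ‖ℓ^(t) − m^(t)‖_∞² − Σ_{t=1}^T (1/(4η^(t))) ‖x^(t) − x^(t+1)‖_1² + 2‖m^(T+1)‖_∞. -/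
open Finset

noncomputable section

/-!
For the Gibbs distribution `s ∝ exp (-η v)` one has `η (⟨z, v⟩ - H z / η) + log Z = KL(z ‖ s)`
on the simplex. Hence `s` is the unique minimizer of the entropic objective, and by Pinsker's
inequality the objective exceeds its minimum by at least `‖z - s‖₁² / (2η)`.

Given this quadratic growth, the optimistic FTRL analysis telescopes the potential
`Φ t = ⟨x t, L t⟩ - H (x t) / η t`, where `L t` is the loss accumulated before round `t`. Comparing
`x t` with `x (t + 1)` in the objective of round `t` bounds `⟨x t, ℓ t⟩` by `Φ (t + 1) - Φ t`, plus
`η t ‖ℓ t - m t‖∞² - ‖x t - x (t + 1)‖₁² / (4 η t)` (Hölder and AM-GM), plus the cost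
`H (x (t + 1)) (1 / η (t + 1) - 1 / η t)` of the shrinking step size, which telescopes as well once
`H` is bounded by `log d`. Finally, minimality of `x (T + 1)` against `x*` bounds `Φ (T + 1)` by the
loss of `x*` plus `2 ‖m (T + 1)‖∞`.
-/

open Set in
lemma nonneg_of_hasDerivAt_of_sub_one_mul_nonneg {f f' : ℝ → ℝ}
    (hf : ∀ t, 0 < t → HasDerivAt f (f' t) t) (h1 : f 1 = 0)
    (hf' : ∀ t, 0 < t → 0 ≤ (t - 1) * f' t) {t : ℝ} (ht : 0 < t) : 0 ≤ f t := by
  have hcont : ∀ a, 0 < a → ∀ b, ContinuousOn f (Icc a b) := fun a ha b s hs =>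
    (hf s (ha.trans_le hs.1)).continuousAt.continuousWithinAt
  rcases lt_trichotomy t 1 with hlt | rfl | hgt
  · obtain ⟨c, hc, hslope⟩ := exists_hasDerivAt_eq_slope f f' hlt (hcont t ht 1)
      fun s hs => hf s (ht.trans hs.1)
    have hc' : f' c ≤ 0 := nonpos_of_mul_nonneg_right (hf' c (ht.trans hc.1)) (by linarith [hc.2])
    rw [hslope, h1, div_nonpos_iff] at hc'
    rcases hc' with h | h <;> linarith [h.1, h.2]
  · exact h1.ge
  · obtain ⟨c, hc, hslope⟩ := exists_hasDerivAt_eq_slope f f' hgt (hcont 1 one_pos t)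
      fun s hs => hf s (one_pos.trans hs.1)
    have hc' : 0 ≤ f' c :=
      nonneg_of_mul_nonneg_right (hf' c (one_pos.trans hc.1)) (by linarith [hc.1])
    rw [hslope, h1, sub_zero] at hc'
    exact (div_nonneg_iff.mp hc').elim (fun h => h.1) fun h => by linarith [h.2]

open Real InformationTheory Set in
theorem three_mul_sq_div_le_klFun {t : ℝ} (ht : 0 ≤ t) :
    3 * (t - 1) ^ 2 / (2 * t + 4) ≤ klFun t := by
  rw [div_le_iff₀ (by linarith), ← sub_nonneg]
  rcases ht.eq_or_lt with rfl | ht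
  · norm_num [klFun_zero]
  -- `klFun t * (2 t + 4) - 3 (t - 1) ^ 2` has derivative `4 k t`, and `k` increases through 0 at 1
  set k : ℝ → ℝ := fun t => (t + 1) * log t - 2 * (t - 1)
  have hk : ∀ t, 0 < t → HasDerivAt k (log t + 1 / t - 1) t := fun t ht => by
    have := (((hasDerivAt_id t).add_const 1).mul (hasDerivAt_log ht.ne')).sub
      (((hasDerivAt_id t).sub_const 1).const_mul 2)
    refine this.congr_deriv ?_
    simp only [id]
    field_simp
    ring
  have hk_mono : MonotoneOn k (Ioi 0) := by
    refine monotoneOn_of_hasDerivWithinAt_nonneg (convex_Ioi 0)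
      (fun s hs => (hk s hs).continuousAt.continuousWithinAt)
      (fun s hs => (hk s (interior_subset hs)).hasDerivWithinAt) fun s hs => ?_
    have := one_sub_inv_le_log_of_pos (interior_subset hs : 0 < s)
    rw [one_div]
    linarith
  have hk1 : k 1 = 0 := by simp [k]
  refine nonneg_of_hasDerivAt_of_sub_one_mul_nonneg
    (f := fun t => klFun t * (2 * t + 4) - 3 * (t - 1) ^ 2) (f' := fun t => 4 * k t)
    (fun s hs => ?_)
    (by simp [klFun_one]) (fun s hs => ?_) ht
  · have := ((hasDerivAt_klFun hs.ne').mul ((hasDerivAt_id s).const_mul 2 |>.add_const 4)).sub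
      (((hasDerivAt_id s).sub_const 1).pow 2 |>.const_mul 3)
    refine this.congr_deriv ?_
    simp only [k, klFun_apply, id]
    ring
  · rcases le_total s 1 with hs1 | hs1
    · have := hk_mono hs (mem_Ioi.2 one_pos) hs1
      exact mul_nonneg_of_nonpos_of_nonpos (by linarith) (by linarith)
    · have := hk_mono (mem_Ioi.2 one_pos) hs hs1
      exact mul_nonneg (by linarith) (by linarith)

section Vectors

variable {d : ℕ}

lemma inp_add_right (z u v : Fin d → ℝ) : inp z (u + v) = inp z u + inp z v :=
  dotProduct_add z u v

lemma inp_sub_right (z u v : Fin d → ℝ) : inp z (u - v) = inp z u - inp z v :=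
  dotProduct_sub z u v

lemma inp_sub_left (u v z : Fin d → ℝ) : inp (u - v) z = inp u z - inp v z :=
  sub_dotProduct u v z

lemma inp_sum_right {ι : Type*} (z : Fin d → ℝ) (s : Finset ι) (f : ι → Fin d → ℝ) :
    inp z (∑ i ∈ s, f i) = ∑ i ∈ s, inp z (f i) :=
  dotProduct_sum z s f

lemma l1_sub_comm (u v : Fin d → ℝ) : l1 (u - v) = l1 (v - u) := by
  simp only [l1, Pi.sub_apply, abs_sub_comm]

lemma l1_eq_zero_iff {v : Fin d → ℝ} : l1 v = 0 ↔ v = 0 := by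
  simp [l1, Finset.sum_eq_zero_iff_of_nonneg, funext_iff]

lemma l1_sub_le_two {u v : Fin d → ℝ} (hu : u ∈ simplex d) (hv : v ∈ simplex d) :
    l1 (u - v) ≤ 2 :=
  calc l1 (u - v) ≤ ∑ k, (u k + v k) :=
        sum_le_sum fun k _ => (abs_sub _ _).trans_eq <| by
          rw [abs_of_nonneg (hu.1 k), abs_of_nonneg (hv.1 k)]
    _ = 2 := by rw [sum_add_distrib, hu.2, hv.2]; norm_num

lemma abs_le_linf (v : Fin d → ℝ) (k : Fin d) : |v k| ≤ linf v :=
  le_ciSup (f := fun k => |v k|) (Finite.bddAbove_range _) k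

lemma linf_nonneg (v : Fin d → ℝ) : 0 ≤ linf v :=
  Real.iSup_nonneg fun _ => abs_nonneg _

lemma inp_le_l1_mul_linf (u v : Fin d → ℝ) : inp u v ≤ l1 u * linf v := by
  rw [inp, l1, sum_mul]
  refine sum_le_sum fun k _ => ?_
  calc u k * v k ≤ |u k| * |v k| := (le_abs_self _).trans_eq (abs_mul _ _)
    _ ≤ |u k| * linf v := mul_le_mul_of_nonneg_left (abs_le_linf v k) (abs_nonneg _)

lemma pos_of_mem_simplex {x : Fin d → ℝ} (hx : x ∈ simplex d) : 0 < d := by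
  rcases Nat.eq_zero_or_pos d with rfl | hd
  · simp [simplex] at hx
  · exact hd

end Vectors

section Entropy

open Real InformationTheory

variable {d : ℕ}

def relEntropy (z s : Fin d → ℝ) : ℝ := ∑ k, s k * klFun (z k / s k)

lemma mul_klFun_div (z : ℝ) {s : ℝ} (hs : 0 < s) :
    s * klFun (z / s) = z * (log z - log s) + s - z := by
  rcases eq_or_ne z 0 with rfl | hz
  · simp [klFun_zero]
  · rw [klFun_apply, log_div hz hs.ne']
    field_simp [hs.ne']

lemma relEntropy_eq {z s : Fin d → ℝ} (hs_pos : ∀ k, 0 < s k) (hsum : ∑ k, z k = ∑ k, s k) :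
    relEntropy z s = ∑ k, z k * (log (z k) - log (s k)) := by
  simp only [relEntropy, mul_klFun_div _ (hs_pos _), sum_sub_distrib, sum_add_distrib, hsum,
    add_sub_cancel_right]

lemma relEntropy_nonneg {z s : Fin d → ℝ} (hz : ∀ k, 0 ≤ z k) (hs : ∀ k, 0 ≤ s k) :
    0 ≤ relEntropy z s :=
  sum_nonneg fun k _ => mul_nonneg (hs k) (klFun_nonneg (div_nonneg (hz k) (hs k)))

lemma three_mul_sq_div_le_mul_klFun {a b : ℝ} (ha : 0 ≤ a) (hb : 0 < b) :
    3 * (a - b) ^ 2 / (2 * a + 4 * b) ≤ b * klFun (a / b) := by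
  refine le_of_eq_of_le ?_
    (mul_le_mul_of_nonneg_left (three_mul_sq_div_le_klFun (div_nonneg ha hb.le)) hb.le)
  have : 2 * a + 4 * b ≠ 0 := by positivity
  field_simp [hb.ne']

/-- Pinsker's inequality. -/
theorem sq_l1_sub_le_two_mul_relEntropy {z s : Fin d → ℝ} (hz : z ∈ simplex d)
    (hs : s ∈ simplex d) (hs_pos : ∀ k, 0 < s k) : l1 (z - s) ^ 2 ≤ 2 * relEntropy z s := by
  have hw : ∀ k ∈ univ, 0 < 2 * z k + 4 * s k := fun k _ => by linarith [hz.1 k, hs_pos k]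
  have hw_sum : ∑ k, (2 * z k + 4 * s k) = 6 := by
    rw [sum_add_distrib, ← mul_sum, ← mul_sum, hz.2, hs.2]; norm_num
  have titu := sq_sum_div_le_sum_sq_div univ (fun k => |(z - s) k|) hw
  rw [hw_sum] at titu
  have hpt : ∀ k ∈ univ, |(z - s) k| ^ 2 / (2 * z k + 4 * s k) ≤ s k * klFun (z k / s k) / 3 :=
    fun k _ => by
      rw [sq_abs, le_div_iff₀ three_pos, div_mul_eq_mul_div, mul_comm]
      exact three_mul_sq_div_le_mul_klFun (hz.1 k) (hs_pos k)
  have := titu.trans (sum_le_sum hpt)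
  rw [← sum_div] at this
  unfold l1 relEntropy
  linarith

lemma shannonH_eq_neg_sum (x : Fin d → ℝ) : shannonH x = -∑ k, x k * log (x k) := by
  simp only [shannonH, one_div, log_inv, mul_neg, sum_neg_distrib]

lemma shannonH_nonneg {x : Fin d → ℝ} (hx : x ∈ simplex d) : 0 ≤ shannonH x := by
  rw [shannonH_eq_neg_sum, neg_nonneg]
  exact sum_nonpos fun k _ => mul_log_nonpos (hx.1 k) <|
    hx.2 ▸ single_le_sum (fun j _ => hx.1 j) (mem_univ k)

/-- The gap `log d - H x` is the relative entropy of `x` to the uniform distribution. -/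
lemma shannonH_le_log {x : Fin d → ℝ} (hx : x ∈ simplex d) : shannonH x ≤ log d := by
  have hd : (0 : ℝ) < d := Nat.cast_pos.2 (pos_of_mem_simplex hx)
  have hu : (fun _ => (d : ℝ)⁻¹) ∈ simplex d :=
    ⟨fun _ => inv_nonneg.2 hd.le, by simp [hd.ne']⟩
  have := relEntropy_nonneg hx.1 hu.1
  rw [relEntropy_eq (fun _ => inv_pos.2 hd) (hx.2.trans hu.2.symm)] at this
  simp only [log_inv, sub_neg_eq_add, mul_add, sum_add_distrib, ← sum_mul, hx.2, one_mul] at this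
  rw [shannonH_eq_neg_sum]
  linarith

end Entropy

def ftrlObjective {d : ℕ} (h : (Fin d → ℝ) → ℝ) (η : ℝ) (v z : Fin d → ℝ) : ℝ :=
  inp z v - h z / η

section Gibbs

open Real InformationTheory

variable {d : ℕ}

def gibbs (η : ℝ) (v : Fin d → ℝ) : Fin d → ℝ :=
  fun k => exp (-(η * v k)) / ∑ j, exp (-(η * v j))

lemma sum_exp_pos (hd : 0 < d) (η : ℝ) (v : Fin d → ℝ) : 0 < ∑ j, exp (-(η * v j)) :=
  have : Nonempty (Fin d) := Fin.pos_iff_nonempty.mp hd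
  sum_pos (fun _ _ => exp_pos _) univ_nonempty

lemma gibbs_pos (hd : 0 < d) (η : ℝ) (v : Fin d → ℝ) (k : Fin d) : 0 < gibbs η v k :=
  div_pos (exp_pos _) (sum_exp_pos hd η v)

lemma gibbs_mem_simplex (hd : 0 < d) (η : ℝ) (v : Fin d → ℝ) : gibbs η v ∈ simplex d :=
  ⟨fun k => (gibbs_pos hd η v k).le, by
    unfold gibbs
    rw [← sum_div, div_self (sum_exp_pos hd η v).ne']⟩

lemma relEntropy_gibbs {η : ℝ} (hη : η ≠ 0) (v : Fin d → ℝ) {z : Fin d → ℝ} (hz : z ∈ simplex d) :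
    relEntropy z (gibbs η v) = η * ftrlObjective shannonH η v z + log (∑ j, exp (-(η * v j))) := by
  have hd := pos_of_mem_simplex hz
  have hlog : ∀ k, log (gibbs η v k) = -(η * v k) - log (∑ j, exp (-(η * v j))) := fun k => by
    unfold gibbs
    rw [log_div (exp_pos _).ne' (sum_exp_pos hd η v).ne', log_exp]
  rw [relEntropy_eq (gibbs_pos hd η v) (hz.2.trans (gibbs_mem_simplex hd η v).2.symm),
    ftrlObjective, shannonH_eq_neg_sum, inp]
  calc _ = ∑ k, (z k * log (z k) + η * (z k * v k) + log (∑ j, exp (-(η * v j))) * z k) :=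
        sum_congr rfl fun k _ => by rw [hlog]; ring
    _ = _ := by
        rw [sum_add_distrib, sum_add_distrib, ← mul_sum, ← mul_sum, hz.2]
        field_simp
        ring

theorem ftrlObjective_shannonH_quadratic_growth {η : ℝ} (hη : 0 < η) {v x : Fin d → ℝ}
    (hx : x ∈ simplex d)
    (hmin : ∀ z ∈ simplex d, ftrlObjective shannonH η v x ≤ ftrlObjective shannonH η v z)
    {z : Fin d → ℝ} (hz : z ∈ simplex d) :
    ftrlObjective shannonH η v x + 1 / (2 * η) * l1 (z - x) ^ 2 ≤ ftrlObjective shannonH η v z := by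
  have hd := pos_of_mem_simplex hx
  set s := gibbs η v
  have hs := gibbs_mem_simplex hd η v
  have hs_pos := gibbs_pos hd η v
  have hpinsker := fun {y} (hy : y ∈ simplex d) => sq_l1_sub_le_two_mul_relEntropy hy hs hs_pos
  have hrel := fun {y} (hy : y ∈ simplex d) => relEntropy_gibbs hη.ne' v hy
  have hss : relEntropy s s = 0 := by
    have : ∀ k, s k / s k = 1 := fun k => div_self (hs_pos k).ne'
    simp [relEntropy, this, klFun_one]
  have hxs : x = s := by
    have := hpinsker hx
    rw [← sub_eq_zero, ← l1_eq_zero_iff]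
    nlinarith [hmin s hs, hrel hx, hrel hs, hss, sq_nonneg (l1 (x - s))]
  have key : l1 (z - s) ^ 2 / 2
      ≤ η * (ftrlObjective shannonH η v z - ftrlObjective shannonH η v s) := by
    linarith [hpinsker hz, hrel hz, hrel hs]
  rw [hxs, ← le_sub_iff_add_le']
  calc 1 / (2 * η) * l1 (z - s) ^ 2 = l1 (z - s) ^ 2 / 2 / η := by ring
    _ ≤ _ := (div_le_iff₀' hη).2 key

end Gibbs

section OFTRL

variable {d : ℕ}

def cumLoss (ℓ : ℕ → Fin d → ℝ) (t : ℕ) : Fin d → ℝ := ∑ s ∈ Icc 1 (t - 1), ℓ s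

lemma cumLoss_one (ℓ : ℕ → Fin d → ℝ) : cumLoss ℓ 1 = 0 := rfl

lemma cumLoss_succ (ℓ : ℕ → Fin d → ℝ) {t : ℕ} (ht : 1 ≤ t) :
    cumLoss ℓ (t + 1) = cumLoss ℓ t + ℓ t := by
  obtain ⟨n, rfl⟩ : ∃ n, t = n + 1 := ⟨t - 1, by omega⟩
  simp only [cumLoss, Nat.add_sub_cancel]
  exact sum_Icc_succ_top (by omega) ℓ

lemma ftrlObjective_add (h : (Fin d → ℝ) → ℝ) (η : ℝ) (u w z : Fin d → ℝ) :
    ftrlObjective h η (u + w) z = inp z u + ftrlObjective h η w z := by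
  simp only [ftrlObjective, inp_add_right]
  ring

lemma sum_Icc_sub_telescope (f : ℕ → ℝ) (T : ℕ) :
    ∑ t ∈ Icc 1 T, (f (t + 1) - f t) = f (T + 1) - f 1 := by
  rw [← Ico_add_one_right_eq_Icc, sum_Ico_sub f (by omega)]

lemma sum_mul_one_div_sub_le {T : ℕ} {a η : ℕ → ℝ} {D : ℝ} (ha : ∀ t ∈ Icc 1 T, a t ≤ D)
    (hηpos : ∀ t ∈ Icc 1 (T + 1), 0 < η t) (hηmono : ∀ t ∈ Icc 1 T, η (t + 1) ≤ η t) :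
    ∑ t ∈ Icc 1 T, a t * (1 / η (t + 1) - 1 / η t) ≤ D / η (T + 1) - D / η 1 := by
  calc ∑ t ∈ Icc 1 T, a t * (1 / η (t + 1) - 1 / η t)
      ≤ ∑ t ∈ Icc 1 T, (D / η (t + 1) - D / η t) := sum_le_sum fun t ht => by
        have hη' : 0 < η (t + 1) := hηpos (t + 1) (by simp only [mem_Icc] at ht ⊢; omega)
        rw [div_eq_mul_one_div D, div_eq_mul_one_div D, ← mul_sub]
        exact mul_le_mul_of_nonneg_right (ha t ht)
          (sub_nonneg.2 (one_div_le_one_div_of_le hη' (hηmono t ht)))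
    _ = D / η (T + 1) - D / η 1 := sum_Icc_sub_telescope (fun t => D / η t) T

lemma inp_sub_sq_l1_le {η : ℝ} (hη : 0 < η) (u w : Fin d → ℝ) :
    inp u w - 1 / (2 * η) * l1 u ^ 2 ≤ η * linf w ^ 2 - 1 / (4 * η) * l1 u ^ 2 := by
  have holder := inp_le_l1_mul_linf u w
  -- AM-GM: `l1 u * linf w ≤ η * linf w ^ 2 + l1 u ^ 2 / (4 * η)`
  have amgm : 0 ≤ (2 * η * linf w - l1 u) ^ 2 / (4 * η) := by positivity
  have : (2 * η * linf w - l1 u) ^ 2 / (4 * η)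
      = η * linf w ^ 2 - l1 u * linf w + 1 / (4 * η) * l1 u ^ 2 := by
    field_simp
    ring
  have : 1 / (2 * η) * l1 u ^ 2 = 2 * (1 / (4 * η) * l1 u ^ 2) := by
    field_simp
    ring
  linarith

variable {h : (Fin d → ℝ) → ℝ} {η : ℕ → ℝ} {ℓ m x : ℕ → Fin d → ℝ}

lemma oftrl_step_le {t : ℕ} (ht : 1 ≤ t) (hη : 0 < η t)
    (hgrowth : ∀ z ∈ simplex d, ftrlObjective h (η t) (m t + cumLoss ℓ t) (x t)
      + 1 / (2 * η t) * l1 (z - x t) ^ 2 ≤ ftrlObjective h (η t) (m t + cumLoss ℓ t) z)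
    (hx : x (t + 1) ∈ simplex d) :
    inp (x t) (ℓ t) ≤ η t * linf (ℓ t - m t) ^ 2 - 1 / (4 * η t) * l1 (x t - x (t + 1)) ^ 2
      + (ftrlObjective h (η (t + 1)) (cumLoss ℓ (t + 1)) (x (t + 1))
        - ftrlObjective h (η t) (cumLoss ℓ t) (x t))
      + h (x (t + 1)) * (1 / η (t + 1) - 1 / η t) := by
  have hnext := hgrowth _ hx
  have hamgm := inp_sub_sq_l1_le hη (x t - x (t + 1)) (ℓ t - m t)
  rw [l1_sub_comm] at hnext
  simp only [ftrlObjective, cumLoss_succ ℓ ht, inp_add_right, inp_sub_left,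
    inp_sub_right] at hnext hamgm ⊢
  rw [mul_sub, mul_one_div, mul_one_div]
  linarith

lemma ftrlObjective_last_le {T : ℕ} (hη : 0 < η (T + 1))
    (hgrowth : ∀ z ∈ simplex d,
      ftrlObjective h (η (T + 1)) (m (T + 1) + cumLoss ℓ (T + 1)) (x (T + 1))
        + 1 / (2 * η (T + 1)) * l1 (z - x (T + 1)) ^ 2
        ≤ ftrlObjective h (η (T + 1)) (m (T + 1) + cumLoss ℓ (T + 1)) z)
    (hx : x (T + 1) ∈ simplex d) {xs : Fin d → ℝ} (hxs : xs ∈ simplex d) :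
    ftrlObjective h (η (T + 1)) (cumLoss ℓ (T + 1)) (x (T + 1))
      ≤ ∑ t ∈ Icc 1 T, inp xs (ℓ t) + 2 * linf (m (T + 1)) - h xs / η (T + 1) := by
  have hmin := (hgrowth xs hxs).trans' <| le_add_of_nonneg_right (by positivity)
  have hm := (inp_le_l1_mul_linf (xs - x (T + 1)) (m (T + 1))).trans <|
    mul_le_mul_of_nonneg_right (l1_sub_le_two hxs hx) (linf_nonneg _)
  have hcum : inp xs (cumLoss ℓ (T + 1)) = ∑ t ∈ Icc 1 T, inp xs (ℓ t) := by
    rw [cumLoss, Nat.add_sub_cancel, inp_sum_right]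
  rw [ftrlObjective_add, ftrlObjective_add] at hmin
  rw [inp_sub_left] at hm
  simp only [ftrlObjective, hcum] at hmin ⊢
  linarith

theorem oftrl_rvu_of_quadratic_growth {T : ℕ} {D : ℝ}
    (hηpos : ∀ t ∈ Icc 1 (T + 1), 0 < η t) (hηmono : ∀ t ∈ Icc 1 T, η (t + 1) ≤ η t)
    (hh : ∀ z ∈ simplex d, 0 ≤ h z ∧ h z ≤ D) (hx : ∀ t ∈ Icc 1 (T + 1), x t ∈ simplex d)
    (hgrowth : ∀ t ∈ Icc 1 (T + 1), ∀ z ∈ simplex d,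
      ftrlObjective h (η t) (m t + cumLoss ℓ t) (x t) + 1 / (2 * η t) * l1 (z - x t) ^ 2
        ≤ ftrlObjective h (η t) (m t + cumLoss ℓ t) z)
    {xs : Fin d → ℝ} (hxs : xs ∈ simplex d) :
    ∑ t ∈ Icc 1 T, inp (x t - xs) (ℓ t)
      ≤ D / η (T + 1) + ∑ t ∈ Icc 1 T, η t * linf (ℓ t - m t) ^ 2
        - ∑ t ∈ Icc 1 T, 1 / (4 * η t) * l1 (x t - x (t + 1)) ^ 2 + 2 * linf (m (T + 1)) := by
  have hIcc : ∀ t ∈ Icc 1 T, t ∈ Icc 1 (T + 1) ∧ t + 1 ∈ Icc 1 (T + 1) := fun t ht => by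
    simp only [mem_Icc] at ht ⊢; omega
  have hlast : T + 1 ∈ Icc 1 (T + 1) := by simp
  have hfirst : 1 ∈ Icc 1 (T + 1) := by simp
  have hsteps := sum_le_sum fun t ht => oftrl_step_le (mem_Icc.1 ht).1
    (hηpos t (hIcc t ht).1) (hgrowth t (hIcc t ht).1) (hx (t + 1) (hIcc t ht).2)
  rw [sum_add_distrib, sum_add_distrib, sum_sub_distrib,
    sum_Icc_sub_telescope (fun t => ftrlObjective h (η t) (cumLoss ℓ t) (x t))] at hsteps
  have hΦ1 : ftrlObjective h (η 1) (cumLoss ℓ 1) (x 1) = -(h (x 1) / η 1) := by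
    simp [ftrlObjective, cumLoss_one, inp]
  have hΦlast := ftrlObjective_last_le (hηpos _ hlast) (hgrowth _ hlast) (hx _ hlast) hxs
  have hstepsize := sum_mul_one_div_sub_le (a := fun t => h (x (t + 1))) (D := D)
    (fun t ht => (hh _ (hx _ (hIcc t ht).2)).2) hηpos hηmono
  have hx1 : h (x 1) / η 1 ≤ D / η 1 :=
    div_le_div_of_nonneg_right (hh _ (hx 1 hfirst)).2 (hηpos 1 hfirst).le
  have hxs_nonneg : 0 ≤ h xs / η (T + 1) := div_nonneg (hh xs hxs).1 (hηpos _ hlast).le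
  simp only [hΦ1] at hsteps
  simp only [inp_sub_left, sum_sub_distrib]
  linarith

end OFTRL

theorem oftrl_shannon_rvu_general
    (d T : ℕ)
    (η : ℕ → ℝ)
    (hηpos : ∀ t ∈ Finset.Icc 1 (T + 1), 0 < η t)
    (hηmono : ∀ t ∈ Finset.Icc 1 T, η (t + 1) ≤ η t)
    (ℓ mp : ℕ → Fin d → ℝ)
    (x : ℕ → Fin d → ℝ)
    (hx : ∀ t ∈ Finset.Icc 1 (T + 1), x t ∈ simplex d ∧
      ∀ z ∈ simplex d,
        inp (x t) (mp t + ∑ s ∈ Finset.Icc 1 (t - 1), ℓ s) - shannonH (x t) / η t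
          ≤ inp z (mp t + ∑ s ∈ Finset.Icc 1 (t - 1), ℓ s) - shannonH z / η t) :
    ∀ xs ∈ simplex d,
      ∑ t ∈ Finset.Icc 1 T, inp (x t - xs) (ℓ t)
        ≤ Real.log d / η (T + 1)
          + (∑ t ∈ Finset.Icc 1 T, η t * (linf (ℓ t - mp t)) ^ 2)
          - (∑ t ∈ Finset.Icc 1 T, (1 / (4 * η t)) * (l1 (x t - x (t + 1))) ^ 2)
          + 2 * linf (mp (T + 1)) := fun _ hxs =>
  oftrl_rvu_of_quadratic_growth hηpos hηmono (fun _ hz => ⟨shannonH_nonneg hz, shannonH_le_log hz⟩)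
    (fun t ht => (hx t ht).1)
    (fun t ht _ hz =>
      ftrlObjective_shannonH_quadratic_growth (hηpos t ht) (hx t ht).1 (hx t ht).2 hz)
    hxs

/-- RVU bound for optimistic FTRL with the negative Shannon entropy
regularizer (Lemma `oftrl_shannon`). -/
theorem oftrl_shannon_rvu
    (d T : ℕ) (hd : 2 ≤ d)
    (η : ℕ → ℝ)
    (hηpos : ∀ t ∈ Finset.Icc 1 (T + 1), 0 < η t)
    (hηmono : ∀ t ∈ Finset.Icc 1 T, η (t + 1) ≤ η t)
    (ℓ mp : ℕ → Fin d → ℝ)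
    (x : ℕ → Fin d → ℝ)
    (hx : ∀ t ∈ Finset.Icc 1 (T + 1), x t ∈ simplex d ∧
      ∀ z ∈ simplex d,
        inp (x t) (mp t + ∑ s ∈ Finset.Icc 1 (t - 1), ℓ s) - shannonH (x t) / η t
          ≤ inp z (mp t + ∑ s ∈ Finset.Icc 1 (t - 1), ℓ s) - shannonH z / η t) :
    ∀ xs ∈ simplex d,
      ∑ t ∈ Finset.Icc 1 T, inp (x t - xs) (ℓ t)
        ≤ Real.log d / η (T + 1)
          + (∑ t ∈ Finset.Icc 1 T, η t * (linf (ℓ t - mp t)) ^ 2)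
          - (∑ t ∈ Finset.Icc 1 T, (1 / (4 * η t)) * (l1 (x t - x (t + 1))) ^ 2)
          + 2 * linf (mp (T + 1)) :=
  oftrl_shannon_rvu_general d T η hηpos hηmono ℓ mp x hx
end
end

section
/- For t = 1,…,T let ũ^(t) ∈ ℝ^m, and for each action a ∈ {1,…,m} let y_a^(t) ∈ Δ_m; let Q^(t) ∈ [0,1]^{m×m} be the row-stochastic matrix whose a-th row is y_a^(t), and let x̂^(t) ∈ Δ_m be a stationary distribution of Q^(t), i.e., (Q^(t))ᵀ x̂^(t) = x̂^(t). Define ũ_a^(t) = x̂^(t)(a) · ũ^(t) ∈ ℝ^m. Then for every row-stochastic matrix M ∈ M_m: Σ_{t=1}^T ⟨x̂^(t), M ũ^(t) − ũ^(t)⟩ = Σ_{a=1}^m Σ_{t=1}^T ⟨M(a,·) − y_a^(t), ũ_a^(t)⟩. In words, the swap regret of the stationary-distribution strategies equals the sum over actions a of the external regret of expert a against comparator M(a,·). -/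
open Finset

noncomputable section

/-- the Blum–Mansour reduction of swap regret to external regrets
(Lemma `swap2base_regret`). -/
theorem swap_regret_eq_sum_external_regrets
    (m T : ℕ)
    (ut : ℕ → Fin m → ℝ)
    (y : Fin m → ℕ → Fin m → ℝ)
    (hy : ∀ a, ∀ t ∈ Finset.Icc 1 T, y a t ∈ simplex m)
    (xhat : ℕ → Fin m → ℝ)
    (hxhat : ∀ t ∈ Finset.Icc 1 T, xhat t ∈ simplex m)
    -- x̂⁽ᵗ⁾ is a stationary distribution of the Markov chain Q⁽ᵗ⁾ whose a-th row is y_a⁽ᵗ⁾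
    (hstat : ∀ t ∈ Finset.Icc 1 T, ∀ b, ∑ a, y a t b * xhat t a = xhat t b) :
    ∀ M : Fin m → Fin m → ℝ, rowStoch M →
      ∑ t ∈ Finset.Icc 1 T, inp (xhat t) (mvec M (ut t) - ut t)
        = ∑ a, ∑ t ∈ Finset.Icc 1 T, inp (M a - y a t) (xhat t a • ut t) := by
  intro M hM
  rw [Finset.sum_comm]
  refine Finset.sum_congr rfl fun t ht => ?_
  simp only [inp, mvec, Pi.sub_apply, Pi.smul_apply, smul_eq_mul]
  have h1 : ∀ a : Fin m, ∑ k, (M a k - y a t k) * (xhat t a * ut t k)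
      = xhat t a * ∑ k, M a k * ut t k - ∑ k, y a t k * (xhat t a * ut t k) := by
    intro a
    rw [Finset.mul_sum, ← Finset.sum_sub_distrib]
    exact Finset.sum_congr rfl fun k _ => by ring
  simp only [h1]
  rw [Finset.sum_sub_distrib]
  have h2 : ∑ a, ∑ k, y a t k * (xhat t a * ut t k) = ∑ a, xhat t a * ut t a := by
    rw [Finset.sum_comm]
    refine Finset.sum_congr rfl fun k _ => ?_
    have := hstat t ht k
    calc ∑ a, y a t k * (xhat t a * ut t k)
        = (∑ a, y a t k * xhat t a) * ut t k := by
          rw [Finset.sum_mul]; exact Finset.sum_congr rfl fun a _ => by ring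
      _ = xhat t k * ut t k := by rw [this]
  rw [h2, ← Finset.sum_sub_distrib]
  exact Finset.sum_congr rfl fun a _ => by ring
end
end

section
/- Let T ≥ 1, m_x ≥ 2, m_y ≥ 1, and let Ĉ_x be an even nonnegative integer with Ĉ_x/2 ≤ T. Let A ∈ {0,1}^{m_x×m_y} be the payoff matrix whose first m_x − 1 rows are all ones and whose last row is all zeros. Then for any sequences x̂^(1),…,x̂^(T) ∈ Δ_{m_x} and y^(1),…,y^(T) ∈ Δ_{m_y}, defining x^(t) = e_{m_x} (the m_x-th standard basis vector) for 1 ≤ t ≤ Ĉ_x/2 and x^(t) = x̂^(t) for t > Ĉ_x/2, the corruption satisfies Σ_{t=1}^T ‖x^(t) − x̂^(t)‖_1 ≤ Ĉ_x and the x-player's regret satisfies max_{x*∈Δ_{m_x}} Σ_{t=1}^T ⟨x* − x^(t), A y^(t)⟩ ≥ Ĉ_x/2. Consequently, for any learning dynamics there exists a corrupted two-player zero-sum game with strategy-corruption level Ĉ_x (and no utility corruption) in which Reg_{x,g} = Reg_{x,g̃} ≥ Ĉ_x/2. -/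
open Finset

noncomputable section

/-- linear-in-Ĉₓ regret lower bound under strategy corruption
(Theorem `lower_bounds` (ii)). -/
theorem strategy_corruption_linear_lower_bound
    (mx my T : ℕ) (hmx : 2 ≤ mx) (hmy : 1 ≤ my) (hT : 1 ≤ T)
    (Cx : ℕ) (hCeven : Even Cx) (hCle : Cx / 2 ≤ T)
    -- payoff matrix: first mx−1 rows all ones, last row all zeros
    (A : Fin mx → Fin my → ℝ)
    (hA : ∀ i j, A i j = if (i : ℕ) < mx - 1 then 1 else 0)
    (xhat : ℕ → Fin mx → ℝ) (y : ℕ → Fin my → ℝ)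
    (hxhat : ∀ t ∈ Finset.Icc 1 T, xhat t ∈ simplex mx)
    (hy : ∀ t ∈ Finset.Icc 1 T, y t ∈ simplex my)
    -- e = the mx-th standard basis vector
    (e : Fin mx → ℝ) (he : ∀ k, e k = if (k : ℕ) = mx - 1 then 1 else 0)
    -- corrupted plays: e for the first Ĉₓ/2 rounds, the prescribed strategy afterwards
    (x : ℕ → Fin mx → ℝ)
    (hx1 : ∀ t, 1 ≤ t → t ≤ Cx / 2 → x t = e)
    (hx2 : ∀ t, Cx / 2 < t → x t = xhat t) :
    (∑ t ∈ Finset.Icc 1 T, l1 (x t - xhat t) ≤ (Cx : ℝ)) ∧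
    ∃ xs ∈ simplex mx,
      (Cx : ℝ) / 2 ≤ ∑ t ∈ Finset.Icc 1 T, inp (xs - x t) (mvec A (y t)) := by

  have hmx0 : 0 < mx - 1 := by omega
  set c := Cx / 2 with hc
  have hCx2 : Cx = 2 * c := by
    obtain ⟨k, hk⟩ := hCeven; omega
  have hg : ∀ t ∈ Finset.Icc 1 T, ∀ i : Fin mx,
      mvec A (y t) i = if (i : ℕ) < mx - 1 then 1 else 0 := by
    intro t ht i
    have hy' := hy t ht
    simp only [mvec, hA]
    by_cases h : (i : ℕ) < mx - 1
    · simp only [h, if_true, one_mul]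
      exact hy'.2
    · simp [h]
  have hesum : ∑ k, e k = 1 := by
    have hrw : ∀ k : Fin mx, e k = if k = (⟨mx - 1, by omega⟩ : Fin mx) then 1 else 0 := by
      intro k; rw [he]; congr 1
      simp [Fin.ext_iff]
    simp [hrw]
  have hxsimp : ∀ t ∈ Finset.Icc 1 T, x t ∈ simplex mx := by
    intro t ht
    simp only [Finset.mem_Icc] at ht
    by_cases h : t ≤ c
    · rw [hx1 t ht.1 h]
      refine ⟨fun k => ?_, hesum⟩
      rw [he]; split_ifs <;> norm_num
    · rw [hx2 t (by omega)]
      exact hxhat t (Finset.mem_Icc.mpr ht)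
  have hsub : Finset.Icc 1 c ⊆ Finset.Icc 1 T := Finset.Icc_subset_Icc_right hCle
  constructor
  · -- corruption bound
    have hzero : ∀ t ∈ Finset.Icc 1 T, t ∉ Finset.Icc 1 c → l1 (x t - xhat t) = 0 := by
      intro t ht htc
      simp only [Finset.mem_Icc, not_and, not_le] at ht htc
      rw [hx2 t (htc ht.1)]
      simp [l1]
    rw [← Finset.sum_subset hsub hzero]
    have hbound : ∀ t ∈ Finset.Icc 1 c, l1 (x t - xhat t) ≤ 2 := by
      intro t ht
      have ht' := Finset.mem_Icc.mp ht
      have hxh := hxhat t (hsub ht)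
      rw [hx1 t ht'.1 ht'.2]
      have h1 : ∀ k : Fin mx, |(e - xhat t) k| ≤ e k + xhat t k := by
        intro k
        have := abs_sub (e k) (xhat t k)
        have he1 : |e k| = e k := abs_of_nonneg (by rw [he]; split_ifs <;> norm_num)
        have he2 : |xhat t k| = xhat t k := abs_of_nonneg (hxh.1 k)
        simpa [Pi.sub_apply, he1, he2] using this
      calc l1 (e - xhat t) ≤ ∑ k, (e k + xhat t k) := Finset.sum_le_sum (fun k _ => h1 k)
        _ = 2 := by rw [Finset.sum_add_distrib, hesum, hxh.2]; norm_num
    calc ∑ t ∈ Finset.Icc 1 c, l1 (x t - xhat t) ≤ ∑ t ∈ Finset.Icc 1 c, 2 :=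
          Finset.sum_le_sum hbound
      _ = 2 * c := by simp [Nat.card_Icc, mul_comm]
      _ = (Cx : ℝ) := by rw [hCx2]; push_cast; ring
  · -- regret lower bound
    set i0 : Fin mx := ⟨0, by omega⟩ with hi0
    refine ⟨fun k => if k = i0 then 1 else 0, ⟨fun k => by dsimp only; split_ifs <;> norm_num, by simp⟩, ?_⟩
    set xs : Fin mx → ℝ := fun k => if k = i0 then 1 else 0 with hxs
    have hxsg : ∀ t ∈ Finset.Icc 1 T, inp xs (mvec A (y t)) = 1 := by
      intro t ht
      have : inp xs (mvec A (y t)) = mvec A (y t) i0 := by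
        simp [inp, hxs, Finset.sum_ite_eq']
      rw [this, hg t ht i0]
      simp [hi0, hmx0]
    have hle1 : ∀ t ∈ Finset.Icc 1 T, inp (x t) (mvec A (y t)) ≤ 1 := by
      intro t ht
      have hx' := hxsimp t ht
      calc inp (x t) (mvec A (y t)) ≤ ∑ k, x t k * 1 := by
            refine Finset.sum_le_sum (fun k _ => ?_)
            refine mul_le_mul_of_nonneg_left ?_ (hx'.1 k)
            rw [hg t ht k]; split_ifs <;> norm_num
        _ = 1 := by simpa using hx'.2
    have hterm : ∀ t ∈ Finset.Icc 1 T,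
        inp (xs - x t) (mvec A (y t)) = 1 - inp (x t) (mvec A (y t)) := by
      intro t ht
      rw [← hxsg t ht]
      simp [inp, sub_mul, Finset.sum_sub_distrib]
    have hone : ∀ t ∈ Finset.Icc 1 c, inp (xs - x t) (mvec A (y t)) = 1 := by
      intro t ht
      have ht' := Finset.mem_Icc.mp ht
      rw [hterm t (hsub ht)]
      have : inp (x t) (mvec A (y t)) = 0 := by
        rw [hx1 t ht'.1 ht'.2]
        have : inp e (mvec A (y t)) = mvec A (y t) ⟨mx - 1, by omega⟩ := by
          have hrw : ∀ k : Fin mx, e k = if k = (⟨mx - 1, by omega⟩ : Fin mx) then 1 else 0 := by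
            intro k; rw [he]; congr 1; simp [Fin.ext_iff]
          simp [inp, hrw, Finset.sum_ite_eq']
        rw [this, hg t (hsub ht)]
        simp
      rw [this]; ring
    have hmono : ∑ t ∈ Finset.Icc 1 c, inp (xs - x t) (mvec A (y t))
        ≤ ∑ t ∈ Finset.Icc 1 T, inp (xs - x t) (mvec A (y t)) := by
      refine Finset.sum_le_sum_of_subset_of_nonneg hsub (fun t ht _ => ?_)
      rw [hterm t ht]
      linarith [hle1 t ht]
    have hsum : ∑ t ∈ Finset.Icc 1 c, inp (xs - x t) (mvec A (y t)) = c := by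
      rw [Finset.sum_congr rfl hone]
      simp [Nat.card_Icc]
    have : (Cx : ℝ) / 2 = (c : ℝ) := by rw [hCx2]; push_cast; ring
    rw [this, ← hsum]
    exact hmono
end
end

section
/- Let d ≥ 2 and T ≥ 1. For any online algorithm on the probability simplex — i.e., any family of maps f_t producing x^(t) = f_t(ℓ^(1),…,ℓ^(t−1)) ∈ Δ_d for t = 1,…,T — there exist loss vectors ℓ^(1),…,ℓ^(T) ∈ ℝ^d with ‖ℓ^(t)‖_∞ ≤ 1 for all t, and a comparator u ∈ Δ_d, such that Σ_{t=1}^T ⟨x^(t) − u, ℓ^(t)⟩ ≥ √(T/2). -/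
open Finset

noncomputable section

/-!
Let the adversary play `ℓₜ = εₜ (e₁ - e₂)` with uniformly random signs `εₜ`. Since `xₜ` is a
function of `ε₁, …, εₜ₋₁`, the learner's loss `∑ₜ εₜ ⟪xₜ, e₁ - e₂⟫` has mean zero, while the
better of the comparators `e₁`, `e₂` has loss `-|ε₁ + ⋯ + ε_T|`. So some sign pattern forces
regret at least `𝔼 |ε₁ + ⋯ + ε_T|`, which equals `2m C(2m,m) / 4ᵐ` for `T = 2m` and
`(2m+1) C(2m,m) / 4ᵐ` for `T = 2m+1`; the bound `16ᵐ ≤ 4m C(2m,m)²` makes this at least `√(T/2)`.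
-/

namespace Nat

lemma sixteen_pow_le_four_mul_mul_centralBinom_sq {m : ℕ} (hm : 0 < m) :
    16 ^ m ≤ 4 * m * m.centralBinom ^ 2 := by
  induction m, hm using Nat.le_induction with
  | base => decide
  | succ m hm ih =>
    have hstep := succ_mul_centralBinom_succ m
    refine Nat.le_of_mul_le_mul_right ?_ (show 0 < (m + 1) ^ 2 by positivity)
    calc 16 ^ (m + 1) * (m + 1) ^ 2 ≤ 16 * (4 * m * m.centralBinom ^ 2) * (m + 1) ^ 2 := by
          rw [pow_succ, mul_comm (16 ^ m)]; gcongr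
      _ ≤ 4 * (m + 1) * (2 * (2 * m + 1) * m.centralBinom) ^ 2 := by
          have : 4 * m * (m + 1) ≤ (2 * m + 1) ^ 2 := by nlinarith
          nlinarith
      _ = 4 * (m + 1) * (m + 1).centralBinom ^ 2 * (m + 1) ^ 2 := by rw [← hstep]; ring

end Nat

/-- `binomAbsDev n = 2ⁿ 𝔼 |ε₁ + ⋯ + εₙ|` for independent Rademacher signs `εᵢ`. -/
def binomAbsDev (n : ℕ) : ℝ :=
  ∑ ij ∈ antidiagonal n, (n.choose ij.1 : ℝ) * |(ij.1 : ℝ) - ij.2|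

lemma abs_sub_succ_add_abs_succ_sub (i j : ℕ) :
    |(i : ℝ) - ↑(j + 1)| + |↑(i + 1) - (j : ℝ)| = 2 * |(i : ℝ) - j| + if i = j then 2 else 0 := by
  rcases lt_trichotomy i j with h | rfl | h
  · have : (i : ℝ) + 1 ≤ j := by exact_mod_cast h
    rw [if_neg h.ne, abs_of_nonpos (by push_cast; linarith), abs_of_nonpos (by push_cast; linarith),
      abs_of_nonpos (by linarith)]
    push_cast; ring
  · push_cast; norm_num
  · have : (j : ℝ) + 1 ≤ i := by exact_mod_cast h
    rw [if_neg h.ne', abs_of_nonneg (by push_cast; linarith), abs_of_nonneg (by push_cast; linarith),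
      abs_of_nonneg (by linarith)]
    push_cast; ring

lemma binomAbsDev_succ (n : ℕ) :
    binomAbsDev (n + 1) = 2 * binomAbsDev n +
      ∑ ij ∈ antidiagonal n, if ij.1 = ij.2 then 2 * (n.choose ij.1 : ℝ) else 0 := by
  rw [binomAbsDev, sum_antidiagonal_choose_succ_mul (fun i j => |(i : ℝ) - j|), ← sum_add_distrib,
    binomAbsDev, mul_sum, ← sum_add_distrib]
  refine sum_congr rfl fun ij hij => ?_
  rw [HasAntidiagonal.mem_antidiagonal] at hij
  rw [← hij, ← Nat.choose_symm_add, hij, ← mul_add, abs_sub_succ_add_abs_succ_sub]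
  split_ifs <;> ring

lemma binomAbsDev_succ_two_mul (m : ℕ) :
    binomAbsDev (2 * m + 1) = 2 * binomAbsDev (2 * m) + 2 * m.centralBinom := by
  rw [binomAbsDev_succ, sum_eq_single (m, m)]
  · simp [Nat.centralBinom]
  · rintro ⟨i, j⟩ hij hne
    rw [HasAntidiagonal.mem_antidiagonal] at hij
    rw [if_neg]
    rintro (rfl : i = j)
    exact hne (by ext <;> simp <;> omega)
  · intro h
    exact absurd (HasAntidiagonal.mem_antidiagonal.2 (two_mul m).symm) h

lemma binomAbsDev_succ_two_mul_add_one (m : ℕ) :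
    binomAbsDev (2 * m + 2) = 2 * binomAbsDev (2 * m + 1) := by
  rw [binomAbsDev_succ, sum_eq_zero, add_zero]
  rintro ⟨i, j⟩ hij
  rw [HasAntidiagonal.mem_antidiagonal] at hij
  exact if_neg (by dsimp only; omega)

lemma binomAbsDev_two_mul (m : ℕ) : binomAbsDev (2 * m) = 2 * m * m.centralBinom := by
  induction m with
  | zero => simp [binomAbsDev]
  | succ m ih =>
    have hstep : ((m + 1 : ℕ) : ℝ) * (m + 1).centralBinom = 2 * (2 * m + 1) * m.centralBinom := by
      exact_mod_cast Nat.succ_mul_centralBinom_succ m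
    rw [mul_add_one, binomAbsDev_succ_two_mul_add_one, binomAbsDev_succ_two_mul, ih]
    linear_combination (-2) * hstep

lemma binomAbsDev_two_mul_add_one (m : ℕ) :
    binomAbsDev (2 * m + 1) = 2 * (2 * m + 1) * m.centralBinom := by
  rw [binomAbsDev_succ_two_mul, binomAbsDev_two_mul]
  ring

lemma two_pow_mul_sqrt_half_le_binomAbsDev (n : ℕ) :
    2 ^ n * √(n / 2) ≤ binomAbsDev n := by
  have hsq : (2 ^ n * √(n / 2) : ℝ) ^ 2 = 4 ^ n * n / 2 := by
    rw [mul_pow, Real.sq_sqrt (by positivity), ← pow_mul, mul_comm n, pow_mul]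
    ring
  refine le_of_pow_le_pow_left₀ two_ne_zero ?_ ?_
  · exact sum_nonneg fun _ _ => by positivity
  rw [hsq]
  obtain ⟨m, rfl | rfl⟩ := Nat.even_or_odd' n
  · rcases Nat.eq_zero_or_pos m with rfl | hm
    · simp [binomAbsDev]
    have h := Nat.sixteen_pow_le_four_mul_mul_centralBinom_sq hm
    have h' : (16 : ℝ) ^ m * m ≤ 4 * m * m.centralBinom ^ 2 * m := by
      gcongr; exact_mod_cast h
    rw [binomAbsDev_two_mul, pow_mul]
    push_cast
    nlinarith
  · have h : (16 : ℝ) ^ m ≤ 2 * (2 * m + 1) * m.centralBinom ^ 2 := by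
      rcases Nat.eq_zero_or_pos m with rfl | hm
      · simp
      have hC : (16 : ℝ) ^ m ≤ 4 * m * m.centralBinom ^ 2 := by
        exact_mod_cast Nat.sixteen_pow_le_four_mul_mul_centralBinom_sq hm
      nlinarith
    rw [binomAbsDev_two_mul_add_one, pow_succ, pow_mul]
    push_cast
    nlinarith

section SubsetSign

variable {α : Type*} [DecidableEq α]

/-- The sign pattern `t ↦ ±1` encoded by the set `s` of times with sign `+1`. -/
def subsetSign (s : Finset α) (t : α) : ℝ := if t ∈ s then 1 else -1

lemma abs_subsetSign (s : Finset α) (t : α) : |subsetSign s t| = 1 := by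
  unfold subsetSign; split_ifs <;> simp

lemma subsetSign_insert_of_ne {s : Finset α} {t r : α} (h : r ≠ t) :
    subsetSign (insert t s) r = subsetSign s r := by
  simp [subsetSign, h]

lemma sum_subsetSign {s S : Finset α} (hs : s ⊆ S) :
    ∑ t ∈ S, subsetSign s t = 2 * #s - #S := by
  have h : ∀ t, subsetSign s t = 2 * (if t ∈ s then 1 else 0) - 1 := fun t => by
    unfold subsetSign; split_ifs <;> norm_num
  simp only [h, sum_sub_distrib, ← mul_sum, sum_boole, filter_mem_eq_inter, inter_eq_right.2 hs,
    sum_const, nsmul_eq_mul, mul_one]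

lemma sum_powerset_abs_sum_subsetSign (S : Finset α) :
    ∑ s ∈ S.powerset, |∑ t ∈ S, subsetSign s t| = binomAbsDev #S := by
  rw [sum_congr rfl fun s hs => by rw [sum_subsetSign (mem_powerset.1 hs)],
    sum_powerset_apply_card (fun m => |2 * (m : ℝ) - #S|), binomAbsDev,
    Nat.sum_antidiagonal_eq_sum_range_succ_mk]
  refine sum_congr rfl fun k hk => ?_
  rw [Nat.cast_sub (Nat.lt_succ_iff.1 (mem_range.1 hk)), nsmul_eq_mul]
  ring_nf

/-- Toggling `t ∈ s` flips `εₜ` but, by causality, not `F ε t`: the terms cancel in pairs. -/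
lemma sum_powerset_sum_subsetSign_mul_eq_zero [LinearOrder α] (S : Finset α)
    (F : (α → ℝ) → α → ℝ) (hF : ∀ ε ε' t, (∀ r < t, ε r = ε' r) → F ε t = F ε' t) :
    ∑ s ∈ S.powerset, ∑ t ∈ S, subsetSign s t * F (subsetSign s) t = 0 := by
  rw [sum_comm]
  refine sum_eq_zero fun t ht => ?_
  have hnot : t ∉ S.erase t := notMem_erase t S
  rw [← insert_erase ht, sum_powerset_insert hnot, ← sum_add_distrib]
  refine sum_eq_zero fun s hs => ?_
  have hts : t ∉ s := fun h => hnot (mem_powerset.1 hs h)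
  have hF' : F (subsetSign (insert t s)) t = F (subsetSign s) t :=
    hF _ _ t fun r hr => subsetSign_insert_of_ne hr.ne
  simp [subsetSign, hts, hF']

end SubsetSign

lemma inp_eq_dotProduct {d : ℕ} (u v : Fin d → ℝ) : inp u v = u ⬝ᵥ v := rfl

lemma single_mem_simplex {d : ℕ} (i : Fin d) : (Pi.single i 1 : Fin d → ℝ) ∈ simplex d :=
  ⟨fun k => by by_cases h : k = i <;> simp [h], by simp⟩

lemma linf_le_of_forall_abs_le {d : ℕ} [Nonempty (Fin d)] {v : Fin d → ℝ} {c : ℝ}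
    (h : ∀ k, |v k| ≤ c) : linf v ≤ c :=
  ciSup_le h

lemma abs_single_sub_single_apply_le_one {d : ℕ} (i j k : Fin d) :
    |(Pi.single i 1 - Pi.single j 1 : Fin d → ℝ) k| ≤ 1 := by
  simp only [Pi.sub_apply, Pi.single_apply]
  split_ifs <;> norm_num

lemma exists_mem_simplex_sum_inp_sub_smul_eq {d : ℕ} {i j : Fin d} (hij : i ≠ j)
    (x : ℕ → Fin d → ℝ) (ε : ℕ → ℝ) (S : Finset ℕ) :
    ∃ u ∈ simplex d, ∑ t ∈ S, inp (x t - u) (ε t • (Pi.single i 1 - Pi.single j 1)) =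
      ∑ t ∈ S, ε t * inp (x t) (Pi.single i 1 - Pi.single j 1) + |∑ t ∈ S, ε t| := by
  have key : ∀ u, ∑ t ∈ S, inp (x t - u) (ε t • (Pi.single i 1 - Pi.single j 1)) =
      ∑ t ∈ S, ε t * inp (x t) (Pi.single i 1 - Pi.single j 1) - (∑ t ∈ S, ε t) * (u i - u j) := by
    intro u
    simp only [inp_eq_dotProduct, dotProduct_smul, dotProduct_sub, dotProduct_single,
      mul_one, Pi.sub_apply, smul_eq_mul, sum_mul, ← sum_sub_distrib]
    exact sum_congr rfl fun t _ => by ring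
  rcases le_total 0 (∑ t ∈ S, ε t) with h | h
  · refine ⟨Pi.single j 1, single_mem_simplex j, ?_⟩
    rw [key, abs_of_nonneg h]
    simp [hij]
  · refine ⟨Pi.single i 1, single_mem_simplex i, ?_⟩
    rw [key, abs_of_nonpos h]
    simp [hij, sub_eq_add_neg]

theorem olo_simplex_sqrt_lower_bound_general
    (d T : ℕ) (hd : 2 ≤ d)
    -- an arbitrary online algorithm: x⁽ᵗ⁾ depends only on ℓ⁽¹⁾,…,ℓ⁽ᵗ⁻¹⁾
    (alg : (ℕ → Fin d → ℝ) → ℕ → Fin d → ℝ)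
    (hcausal : ∀ l l' t, (∀ s, 1 ≤ s → s < t → l s = l' s) → alg l t = alg l' t) :
    ∃ l : ℕ → Fin d → ℝ,
      (∀ t ∈ Finset.Icc 1 T, linf (l t) ≤ 1) ∧
      ∃ us ∈ simplex d,
        Real.sqrt ((T : ℝ) / 2)
          ≤ ∑ t ∈ Finset.Icc 1 T, inp (alg l t - us) (l t) := by
  set i : Fin d := ⟨0, by omega⟩
  set j : Fin d := ⟨1, by omega⟩
  have hij : i ≠ j := by simp [i, j, Fin.ext_iff]
  set w : Fin d → ℝ := Pi.single i 1 - Pi.single j 1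
  set S := Icc 1 T
  have hmean : ∑ _s ∈ S.powerset, √(T / 2) ≤ ∑ s ∈ S.powerset,
      (∑ t ∈ S, subsetSign s t * inp (alg (fun r => subsetSign s r • w) t) w +
        |∑ t ∈ S, subsetSign s t|) := by
    have hF : ∀ (ε ε' : ℕ → ℝ) t, (∀ r < t, ε r = ε' r) →
        inp (alg (fun r => ε r • w) t) w = inp (alg (fun r => ε' r • w) t) w :=
      fun ε ε' t h => by rw [hcausal _ _ t fun r _ hr => by rw [h r hr]]
    rw [sum_add_distrib, sum_powerset_sum_subsetSign_mul_eq_zero S _ hF, zero_add,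
      sum_powerset_abs_sum_subsetSign, sum_const, card_powerset, Nat.card_Icc, Nat.add_sub_cancel,
      nsmul_eq_mul]
    push_cast
    exact two_pow_mul_sqrt_half_le_binomAbsDev T
  obtain ⟨s, -, hs⟩ := exists_le_of_sum_le (powerset_nonempty S) hmean
  obtain ⟨u, hu, hregret⟩ := exists_mem_simplex_sum_inp_sub_smul_eq hij
    (alg fun r => subsetSign s r • w) (subsetSign s) S
  have : Nonempty (Fin d) := ⟨i⟩
  refine ⟨fun r => subsetSign s r • w, fun t _ => linf_le_of_forall_abs_le fun k => ?_, u, hu,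
    hs.trans_eq hregret.symm⟩
  dsimp only
  rw [Pi.smul_apply, smul_eq_mul, abs_mul, abs_subsetSign, one_mul]
  exact abs_single_sub_single_apply_le_one i j k

/-- √(T/2) regret lower bound for online linear optimization over the
simplex (Lemma `olo_simplex_lower`). -/
theorem olo_simplex_sqrt_lower_bound
    (d T : ℕ) (hd : 2 ≤ d) (hT : 1 ≤ T)
    -- an arbitrary online algorithm: x⁽ᵗ⁾ depends only on ℓ⁽¹⁾,…,ℓ⁽ᵗ⁻¹⁾
    (alg : (ℕ → Fin d → ℝ) → ℕ → Fin d → ℝ)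
    (halg : ∀ l t, alg l t ∈ simplex d)
    (hcausal : ∀ l l' t, (∀ s, 1 ≤ s → s < t → l s = l' s) → alg l t = alg l' t) :
    ∃ l : ℕ → Fin d → ℝ,
      (∀ t ∈ Finset.Icc 1 T, linf (l t) ≤ 1) ∧
      ∃ us ∈ simplex d,
        Real.sqrt ((T : ℝ) / 2)
          ≤ ∑ t ∈ Finset.Icc 1 T, inp (alg l t - us) (l t) :=
  olo_simplex_sqrt_lower_bound_general d T hd alg hcausal
end
end
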